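/- The WEF fairness notion suffers from the inversion paradox for indivisible goods with additive valuations. Concretely, take 3 agents and 5 items e_1, …, e_5 with additive valuations v_1 = v_2 = (10, 10, 11, 12, 37) and v_3 = (10, 10, 11, 12, 57) (listing item values in order), and entitlement vectors b = (0.12, 0.12, 0.76) and b' = (0.11, 0.12, 0.77). Then b' 3-improves b; the set of weighted envy-free complete allocations for b is nonempty and every such allocation gives agent 3 value 80 (agent 3 gets {e_3, e_4, e_5}); the set of weighted envy-free complete allocations for b' is nonempty and every such allocation gives agent 3 value 77. Hence every WEF allocation for b gives agent 3 strictly more value than every WEF allocation for b', even though b' >_3 b. -/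

import Mathlib

/-!
A complete allocation of the five items is the same as an assignment `Fin 5 → Fin 3` of items
to agents. All values are integers and the entitlements are integers divided by 100, so clearing
denominators turns weighted envy-freeness into a decidable integer condition, and both
characterisations follow by checking all 3⁵ assignments. The witnesses are `({e₁}, {e₂},
{e₃, e₄, e₅})` for `b` and `({e₃}, {e₄}, {e₁, e₂, e₅})` for `b'`.
-/

namespace Stmt12

def IsPartition {n m : ℕ} (A : Fin n → Finset (Fin m)) : Prop :=
  (∀ i j, i ≠ j → Disjoint (A i) (A j)) ∧ ∀ e, ∃ i, e ∈ A i

def bval {m : ℕ} (w : Fin m → ℝ) (S : Finset (Fin m)) : ℝ := ∑ e ∈ S, w e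

def v : Fin 3 → Fin 5 → ℝ :=
  ![![10, 10, 11, 12, 37], ![10, 10, 11, 12, 37], ![10, 10, 11, 12, 57]]

noncomputable def b : Fin 3 → ℝ := ![0.12, 0.12, 0.76]

noncomputable def b' : Fin 3 → ℝ := ![0.11, 0.12, 0.77]

noncomputable def WEF (β : Fin 3 → ℝ) (A : Fin 3 → Finset (Fin 5)) : Prop :=
  IsPartition A ∧ ∀ i j, (β i / β j) * bval (v i) (A j) ≤ bval (v i) (A i)

section Assignment

variable {n m : ℕ}

def bundles (f : Fin m → Fin n) (i : Fin n) : Finset (Fin m) :=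
  Finset.univ.filter (f · = i)

@[simp]
lemma mem_bundles {f : Fin m → Fin n} {i : Fin n} {e : Fin m} :
    e ∈ bundles f i ↔ f e = i := by
  simp [bundles]

lemma isPartition_bundles (f : Fin m → Fin n) : IsPartition (bundles f) :=
  ⟨fun _ _ hij => Finset.disjoint_left.mpr fun _ hi hj =>
      hij (mem_bundles.mp hi ▸ mem_bundles.mp hj),
    fun e => ⟨f e, mem_bundles.mpr rfl⟩⟩

lemma IsPartition.exists_eq_bundles {A : Fin n → Finset (Fin m)} (hA : IsPartition A) :
    ∃ f : Fin m → Fin n, A = bundles f := by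
  choose f hf using hA.2
  refine ⟨f, funext fun i => Finset.ext fun e =>
    ⟨fun he => ?_, fun he => mem_bundles.mp he ▸ hf e⟩⟩
  by_contra hne
  exact Finset.disjoint_left.mp (hA.1 (f e) i fun h => hne (mem_bundles.mpr h)) (hf e) he

end Assignment

lemma div_mul_le_iff_mul_le_mul {p q x y : ℝ} (hq : 0 < q) :
    p / q * x ≤ y ↔ p * x ≤ q * y := by
  rw [div_mul_eq_mul_div, div_le_iff₀ hq, mul_comm y]

def vZ : Fin 3 → Fin 5 → ℤ :=
  ![![10, 10, 11, 12, 37], ![10, 10, 11, 12, 37], ![10, 10, 11, 12, 57]]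

def bZ : Fin 3 → ℤ := ![12, 12, 76]

def b'Z : Fin 3 → ℤ := ![11, 12, 77]

lemma bval_v_eq_cast (i : Fin 3) (S : Finset (Fin 5)) :
    bval (v i) S = ((∑ e ∈ S, vZ i e : ℤ) : ℝ) := by
  rw [bval, Int.cast_sum]
  refine Finset.sum_congr rfl fun e _ => ?_
  fin_cases i <;> fin_cases e <;> norm_num [v, vZ]

lemma b_eq_cast (i : Fin 3) : b i = bZ i / 100 := by
  fin_cases i <;> norm_num [b, bZ]

lemma b'_eq_cast (i : Fin 3) : b' i = b'Z i / 100 := by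
  fin_cases i <;> norm_num [b', b'Z]

def IsWEFAssignment (β : Fin 3 → ℤ) (f : Fin 5 → Fin 3) : Prop :=
  ∀ i j, β i * ∑ e ∈ bundles f j, vZ i e ≤ β j * ∑ e ∈ bundles f i, vZ i e

instance (β : Fin 3 → ℤ) : DecidablePred (IsWEFAssignment β) := fun f => by
  unfold IsWEFAssignment; infer_instance

lemma wef_bundles_iff {β : Fin 3 → ℝ} {βZ : Fin 3 → ℤ} (hβ : ∀ i, β i = βZ i / 100)
    (hβZ : ∀ i, 0 < βZ i) (f : Fin 5 → Fin 3) :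
    WEF β (bundles f) ↔ IsWEFAssignment βZ f := by
  refine (and_iff_right (isPartition_bundles f)).trans (forall₂_congr fun i j => ?_)
  have hj : (0 : ℝ) < βZ j := by exact_mod_cast hβZ j
  rw [hβ, hβ, div_div_div_cancel_right₀ (by norm_num), div_mul_le_iff_mul_le_mul hj,
    bval_v_eq_cast, bval_v_eq_cast]
  exact_mod_cast Iff.rfl

lemma WEF.exists_isWEFAssignment {β : Fin 3 → ℝ} {βZ : Fin 3 → ℤ}
    (hβ : ∀ i, β i = βZ i / 100) (hβZ : ∀ i, 0 < βZ i) {A : Fin 3 → Finset (Fin 5)}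
    (hA : WEF β A) : ∃ f, A = bundles f ∧ IsWEFAssignment βZ f := by
  obtain ⟨f, rfl⟩ := hA.1.exists_eq_bundles
  exact ⟨f, rfl, (wef_bundles_iff hβ hβZ f).mp hA⟩

lemma bZ_pos (i : Fin 3) : 0 < bZ i := by fin_cases i <;> decide

lemma b'Z_pos (i : Fin 3) : 0 < b'Z i := by fin_cases i <;> decide

set_option maxRecDepth 20000 in
lemma bundles_two_of_isWEFAssignment_bZ :
    ∀ f, IsWEFAssignment bZ f → bundles f 2 = {2, 3, 4} := by
  decide

set_option maxRecDepth 20000 in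
lemma value_two_of_isWEFAssignment_b'Z :
    ∀ f, IsWEFAssignment b'Z f → ∑ e ∈ bundles f 2, vZ 2 e = 77 := by
  decide

lemma WEF.bundle_two_of_b {A : Fin 3 → Finset (Fin 5)} (hA : WEF b A) :
    A 2 = {2, 3, 4} ∧ bval (v 2) (A 2) = 80 := by
  obtain ⟨f, rfl, hf⟩ := hA.exists_isWEFAssignment b_eq_cast bZ_pos
  rw [bundles_two_of_isWEFAssignment_bZ f hf, bval_v_eq_cast]
  have value : ∑ e ∈ ({2, 3, 4} : Finset (Fin 5)), vZ 2 e = 80 := by decide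
  exact ⟨rfl, by exact_mod_cast value⟩

lemma WEF.value_two_of_b' {A : Fin 3 → Finset (Fin 5)} (hA : WEF b' A) :
    bval (v 2) (A 2) = 77 := by
  obtain ⟨f, rfl, hf⟩ := hA.exists_isWEFAssignment b'_eq_cast b'Z_pos
  rw [bval_v_eq_cast, value_two_of_isWEFAssignment_b'Z f hf]
  norm_num

lemma wef_b : WEF b (bundles ![0, 1, 2, 2, 2]) :=
  (wef_bundles_iff b_eq_cast bZ_pos _).mpr (by decide)

lemma wef_b' : WEF b' (bundles ![2, 2, 0, 1, 2]) :=
  (wef_bundles_iff b'_eq_cast b'Z_pos _).mpr (by decide)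

/-- WEF suffers from the inversion paradox: b' 3-improves b, yet
every WEF complete allocation for b gives agent 3 the bundle {e₃,e₄,e₅} of
value 80, while every WEF complete allocation for b' gives agent 3 value 77. -/
theorem stmt_12 :
    -- b' 3-improves b
    (b 2 < b' 2 ∧ ∀ j, j ≠ 2 → b' j ≤ b j) ∧
    -- WEF allocations for b exist, and all give agent 3 the bundle {e₃,e₄,e₅} of value 80
    (∃ A, WEF b A) ∧
    (∀ A, WEF b A → A 2 = {2, 3, 4} ∧ bval (v 2) (A 2) = 80) ∧
    -- WEF allocations for b' exist, and all give agent 3 value 77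
    (∃ A, WEF b' A) ∧
    (∀ A, WEF b' A → bval (v 2) (A 2) = 77) ∧
    -- hence the inversion: agent 3 gets strictly more under b than under b'
    (∀ A A', WEF b A → WEF b' A' → bval (v 2) (A' 2) < bval (v 2) (A 2)) := by
  have improves : b 2 < b' 2 ∧ ∀ j, j ≠ 2 → b' j ≤ b j := by
    refine ⟨by norm_num [b, b', Matrix.cons_val_two], fun j hj => ?_⟩
    fin_cases j
    · norm_num [b, b']
    · norm_num [b, b']
    · exact absurd rfl hj
  refine ⟨improves, ⟨_, wef_b⟩, fun _ => WEF.bundle_two_of_b, ⟨_, wef_b'⟩,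
    fun _ => WEF.value_two_of_b', fun A A' hA hA' => ?_⟩
  rw [hA.bundle_two_of_b.2, hA'.value_two_of_b']
  norm_num

end Stmt12
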